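/- Let A be a positively graded finite-dimensional algebra over an algebraically closed field K with soc(P^μ) ≅ L^μ⟨d_μ⟩ (degree-zero isomorphism) for each μ ∈ Λ₀. If the endomorphism algebra B of the basic projective-injective module admits an admissible basis Υ, then the canonical form tr attached to Υ is a symmetrizing form on B; in particular, B is a symmetric algebra over K. -/

import Mathlib

/-- The socle of a module: the largest semisimple submodule. -/
def Socle (A M : Type) [Ring A] [AddCommGroup M] [Module A M] : Submodule A M :=
  ⨆ (p : Submodule A M) (_ : IsSimpleModule A ↥p), p

/-- The radical of a module: the intersection of all maximal submodules. -/
def Rad (A M : Type) [Ring A] [AddCommGroup M] [Module A M] : Submodule A M :=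
  sInf {p : Submodule A M | IsCoatom p}

/-- `f` is a homogeneous map of degree `j` with respect to the gradings `gM`, `gN`. -/
def IsHomogMap {K M N : Type} [Field K] [AddCommGroup M] [Module K M]
    [AddCommGroup N] [Module K N]
    (gM : ℤ → Submodule K M) (gN : ℤ → Submodule K N) (j : ℤ) (f : M → N) : Prop :=
  ∀ i : ℤ, ∀ m ∈ gM i, f m ∈ gN (i + j)

/-- The canonical embedding of `Hom_A(P^λ, P^μ)` into `End_A(⊕ P^λ)`. -/
noncomputable def emb (A : Type) [Ring A] (ι : Type) [DecidableEq ι]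
    (P : ι → Type) [∀ i, AddCommGroup (P i)] [∀ i, Module A (P i)]
    (l m : ι) (f : P l →ₗ[A] P m) : Module.End A (DirectSum ι P) :=
  (DirectSum.lof A ι P m).comp (f.comp (DirectSum.component A ι P l))

/-!
Everything is read off the Gram matrix `tr (b i * b j)` of the admissible basis. Projecting an
endomorphism of `⊕ P^λ` onto one block `P^λ → P^μ` and one degree (`blockHomogPart`) shows that
the coordinates of a homogeneous block map are supported on basis elements of the same block and
degree. As `tr` only sees the `θ`'s, which are diagonal of degree `d`, `tr (b i * b j) ≠ 0` forces
`b j` to be of the shape dual to `b i`, and condition (iii) pairs `b i` with exactly one such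
`b j`. So the Gram matrix is symmetric with exactly one nonzero entry in each row and column,
which makes `tr` symmetric and nondegenerate.
-/

open DirectSum

section GramMatrix

variable {K B ι : Type*} [Field K] [Ring B] [Algebra K B] (b : Module.Basis ι K B)
  (tr : B →ₗ[K] K)

theorem trace_mul_comm_of_basis (h : ∀ i j, tr (b i * b j) = tr (b j * b i)) (x y : B) :
    tr (x * y) = tr (y * x) := by
  have key : (LinearMap.mul K B).compr₂ tr = ((LinearMap.mul K B).compr₂ tr).flip :=
    LinearMap.ext_basis b b h
  exact congr($key x y)

theorem exists_trace_mul_ne_zero_of_basis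
    (h : ∀ i, ∃ j, tr (b i * b j) ≠ 0 ∧ ∀ i', i' ≠ i → tr (b i' * b j) = 0)
    {x : B} (hx : x ≠ 0) : ∃ y, tr (x * y) ≠ 0 := by
  obtain ⟨i, hi⟩ : ∃ i, b.repr x i ≠ 0 := by
    by_contra! h0
    exact hx (b.ext_elem fun i => by simp [h0])
  obtain ⟨j, hij, hj⟩ := h i
  have key : tr ∘ₗ (LinearMap.mul K B).flip (b j) = tr (b i * b j) • b.coord i :=
    b.ext fun i' => by
      rcases eq_or_ne i' i with rfl | hne
      · simp
      · simp [hj i' hne, hne]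
  refine ⟨b j, ?_⟩
  have hx := congr($key x)
  simp only [LinearMap.comp_apply, LinearMap.flip_apply, LinearMap.mul_apply',
    LinearMap.smul_apply, Module.Basis.coord_apply, smul_eq_mul] at hx
  rw [hx]
  exact mul_ne_zero hij hi

variable {R : ι → ι → Prop} (hR : ∀ i j, tr (b i * b j) ≠ 0 → R i j)
  (hRsymm : ∀ i j, R i j → R j i)
  (hpair : ∀ i, ∃ i', R i i' ∧ tr (b i' * b i) = tr (b i * b i') ∧ tr (b i * b i') ≠ 0 ∧
    ∀ i'', i'' ≠ i' → R i i'' → b i'' * b i = 0 ∧ b i * b i'' = 0)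
include hR hRsymm hpair

theorem trace_mul_basis_comm_of_pairing (i j : ι) : tr (b i * b j) = tr (b j * b i) := by
  by_cases hij : R i j
  · obtain ⟨i', -, hcomm, -, hzero⟩ := hpair i
    rcases eq_or_ne j i' with rfl | hne
    · exact hcomm.symm
    · rw [(hzero j hne hij).1, (hzero j hne hij).2]
  · rw [not_not.mp (mt (hR i j) hij), not_not.mp (mt (hR j i) (mt (hRsymm j i) hij))]

theorem exists_dual_of_pairing (i : ι) :
    ∃ j, tr (b i * b j) ≠ 0 ∧ ∀ i', i' ≠ i → tr (b i' * b j) = 0 := by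
  obtain ⟨j, hij, -, hne, -⟩ := hpair i
  refine ⟨j, hne, fun i' hi' => by_contra fun h => ?_⟩
  obtain ⟨j', -, -, -, hzero⟩ := hpair j
  rcases eq_or_ne i' j' with rfl | hi'j'
  · exact hne (by rw [(hzero i (Ne.symm hi') (hRsymm _ _ hij)).1, map_zero])
  · exact h (by rw [(hzero i' hi'j' (hRsymm _ _ (hR i' j h))).1, map_zero])

end GramMatrix

theorem IsHomogMap.comp {K M N P : Type} [Field K] [AddCommGroup M] [Module K M]
    [AddCommGroup N] [Module K N] [AddCommGroup P] [Module K P] {gM : ℤ → Submodule K M}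
    {gN : ℤ → Submodule K N} {gP : ℤ → Submodule K P} {j j' : ℤ} {f : N → P} {g : M → N}
    (hf : IsHomogMap gN gP j f) (hg : IsHomogMap gM gN j' g) :
    IsHomogMap gM gP (j' + j) (f ∘ g) :=
  fun k v hv => by rw [← add_assoc]; exact hf _ _ (hg k v hv)

section HomogeneousPart

variable {K M N : Type} [Field K] [AddCommGroup M] [Module K M] [AddCommGroup N] [Module K N]
  (gM : ℤ → Submodule K M) (gN : ℤ → Submodule K N) [Decomposition gM] [Decomposition gN]

-- `homogPart gM gN j g v = ∑ₖ (g vₖ)_{k+j}`, where `vₖ` is the degree-`k` component of `v`.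
def homogPart (j : ℤ) : (M →ₗ[K] N) →ₗ[K] M →ₗ[K] N where
  toFun g := toModule K ℤ N (fun k => (gN (k + j)).subtype ∘ₗ component K ℤ (gN ·) (k + j) ∘ₗ
    (decomposeLinearEquiv gN).toLinearMap ∘ₗ g ∘ₗ (gM k).subtype) ∘ₗ
    (decomposeLinearEquiv gM).toLinearMap
  map_add' f g := decompose_lhom_ext gM fun k => by ext; simp
  map_smul' c g := decompose_lhom_ext gM fun k => by ext; simp

variable {gM gN}

theorem homogPart_apply_of_mem (j : ℤ) (g : M →ₗ[K] N) {k : ℤ} {v : M} (hv : v ∈ gM k) :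
    homogPart gM gN j g v = decompose gN (g v) (k + j) := by
  have : decomposeLinearEquiv gM v = lof K ℤ (gM ·) k ⟨v, hv⟩ :=
    decomposeLinearEquiv_apply_coe gM k ⟨v, hv⟩
  simp only [homogPart, LinearMap.coe_mk, AddHom.coe_mk, LinearMap.coe_comp, LinearEquiv.coe_coe,
    Function.comp_apply, this, toModule_lof, Submodule.coe_subtype, SetLike.coe_eq_coe]
  rfl

theorem homogPart_eq_self {j : ℤ} {g : M →ₗ[K] N} (hg : IsHomogMap gM gN j g) :
    homogPart gM gN j g = g :=
  decompose_lhom_ext gM fun k => LinearMap.ext fun v => by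
    simp only [LinearMap.comp_apply, Submodule.subtype_apply]
    rw [homogPart_apply_of_mem j g v.2, decompose_of_mem_same gN (hg k v v.2)]

theorem homogPart_eq_zero {j j' : ℤ} {g : M →ₗ[K] N} (hg : IsHomogMap gM gN j' g) (h : j' ≠ j) :
    homogPart gM gN j g = 0 :=
  decompose_lhom_ext gM fun k => LinearMap.ext fun v => by
    simp only [LinearMap.comp_apply, Submodule.subtype_apply, LinearMap.zero_apply]
    rw [homogPart_apply_of_mem j g v.2, decompose_of_mem_ne gN (hg k v v.2) (by omega)]

end HomogeneousPart

section Blocks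

variable {R S : Type} [Ring R] [DecidableEq S] {Q : S → Type} [∀ s, AddCommGroup (Q s)]
  [∀ s, Module R (Q s)]

theorem emb_lof_self (l m : S) (f : Q l →ₗ[R] Q m) (q : Q l) :
    emb R S Q l m f (lof R S Q l q) = lof R S Q m (f q) := by
  rw [emb, LinearMap.comp_apply, LinearMap.comp_apply, component.lof_self]

theorem emb_lof_of_ne {l m l' : S} (f : Q l →ₗ[R] Q m) (h : l' ≠ l) (q : Q l') :
    emb R S Q l m f (lof R S Q l' q) = 0 := by
  rw [emb, LinearMap.comp_apply, LinearMap.comp_apply, component.of, dif_neg h, map_zero,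
    map_zero]

theorem emb_zero (l m : S) : emb R S Q l m 0 = 0 := by
  rw [emb, LinearMap.zero_comp, LinearMap.comp_zero]

theorem component_comp_emb_comp_lof (l m : S) (f : Q l →ₗ[R] Q m) :
    component R S Q m ∘ₗ emb R S Q l m f ∘ₗ lof R S Q l = f :=
  LinearMap.ext fun q => by simp [emb_lof_self]

theorem emb_comp_lof_of_ne {l m l' : S} (f : Q l →ₗ[R] Q m) (h : l' ≠ l) :
    emb R S Q l m f ∘ₗ lof R S Q l' = 0 :=
  LinearMap.ext fun q => emb_lof_of_ne f h q

theorem component_comp_emb_of_ne {l m m' : S} (f : Q l →ₗ[R] Q m) (h : m ≠ m') :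
    component R S Q m' ∘ₗ emb R S Q l m f = 0 :=
  LinearMap.ext fun v => by simp [emb, component.of, dif_neg h]

theorem emb_mul_emb {l m n : S} (f : Q m →ₗ[R] Q n) (g : Q l →ₗ[R] Q m) :
    emb R S Q m n f * emb R S Q l m g = emb R S Q l n (f ∘ₗ g) :=
  linearMap_ext R fun s => LinearMap.ext fun q => by
    rcases eq_or_ne s l with rfl | hs
    · simp [emb_lof_self]
    · simp [emb_lof_of_ne _ hs]

theorem emb_mul_emb_of_ne {l m m' n : S} (f : Q m →ₗ[R] Q n) (g : Q l →ₗ[R] Q m') (h : m' ≠ m) :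
    emb R S Q m n f * emb R S Q l m' g = 0 :=
  linearMap_ext R fun s => LinearMap.ext fun q => by
    rcases eq_or_ne s l with rfl | hs
    · simp [emb_lof_self, emb_lof_of_ne _ h]
    · simp [emb_lof_of_ne _ hs]

end Blocks

section HomogeneousBlocks

variable {K A S : Type} [Field K] [Ring A] [DecidableEq S] {Q : S → Type}
  [∀ s, AddCommGroup (Q s)] [∀ s, Module A (Q s)] [∀ s, Module K (Q s)]
  (gr : ∀ s, ℤ → Submodule K (Q s))

def IsHomogBlock (l m : S) (j : ℤ) (x : Module.End A (⨁ s, Q s)) : Prop :=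
  ∃ g : Q l →ₗ[A] Q m, IsHomogMap (gr l) (gr m) j g ∧ x = emb A S Q l m g

variable {gr}

theorem IsHomogBlock.mul {l m n : S} {j j' : ℤ} {f g : Module.End A (⨁ s, Q s)}
    (hf : IsHomogBlock gr m n j f) (hg : IsHomogBlock gr l m j' g) :
    IsHomogBlock gr l n (j' + j) (f * g) := by
  obtain ⟨f, hf, rfl⟩ := hf
  obtain ⟨g, hg, rfl⟩ := hg
  exact ⟨f ∘ₗ g, hf.comp hg, emb_mul_emb f g⟩

theorem IsHomogBlock.mul_eq_zero {l m m' n : S} {j j' : ℤ} {f g : Module.End A (⨁ s, Q s)}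
    (hf : IsHomogBlock gr m n j f) (hg : IsHomogBlock gr l m' j' g) (h : m' ≠ m) : f * g = 0 := by
  obtain ⟨f, -, rfl⟩ := hf
  obtain ⟨g, -, rfl⟩ := hg
  exact emb_mul_emb_of_ne f g h

variable (gr) [Algebra K A] [∀ s, IsScalarTower K A (Q s)] [∀ s, Decomposition (gr s)]

-- Valued in `K`-linear maps: the degree part of an `A`-linear map need not be `A`-linear.
noncomputable def blockHomogPart (l m : S) (j : ℤ) :
    Module.End A (⨁ s, Q s) →ₗ[K] Module.End K (⨁ s, Q s) where
  toFun x := emb K S Q l m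
    (homogPart (gr l) (gr m) j (component K S Q m ∘ₗ x.restrictScalars K ∘ₗ lof K S Q l))
  map_add' x y := by simp [emb, LinearMap.add_comp, LinearMap.comp_add]
  map_smul' c x := by simp [emb, LinearMap.smul_comp, LinearMap.comp_smul]

variable {gr}

theorem blockHomogPart_emb (l m l' m' : S) (j : ℤ) (g : Q l' →ₗ[A] Q m') :
    blockHomogPart gr l m j (emb A S Q l' m' g) = emb K S Q l m (homogPart (gr l) (gr m) j
      ((component A S Q m ∘ₗ emb A S Q l' m' g ∘ₗ lof A S Q l).restrictScalars K)) :=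
  rfl

theorem blockHomogPart_of_isHomogBlock {l m : S} {j : ℤ} {x : Module.End A (⨁ s, Q s)}
    (hx : IsHomogBlock gr l m j x) : blockHomogPart gr l m j x = x.restrictScalars K := by
  obtain ⟨g, hg, rfl⟩ := hx
  rw [blockHomogPart_emb, component_comp_emb_comp_lof,
    homogPart_eq_self (g := g.restrictScalars K) hg]
  rfl

theorem blockHomogPart_of_isHomogBlock_of_ne {l m l' m' : S} {j j' : ℤ}
    {x : Module.End A (⨁ s, Q s)} (hx : IsHomogBlock gr l' m' j' x)
    (h : (l', m', j') ≠ (l, m, j)) : blockHomogPart gr l m j x = 0 := by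
  obtain ⟨g, hg, rfl⟩ := hx
  rw [blockHomogPart_emb]
  rcases eq_or_ne l l' with rfl | hl
  · rcases eq_or_ne m m' with rfl | hm
    · have hj : j' ≠ j := fun hj => h (by rw [hj])
      rw [component_comp_emb_comp_lof, homogPart_eq_zero (g := g.restrictScalars K) hg hj,
        emb_zero]
    · rw [← LinearMap.comp_assoc, component_comp_emb_of_ne g (Ne.symm hm), LinearMap.zero_comp,
        LinearMap.restrictScalars_zero, map_zero, emb_zero]
  · rw [emb_comp_lof_of_ne g hl, LinearMap.comp_zero, LinearMap.restrictScalars_zero, map_zero,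
      emb_zero]

end HomogeneousBlocks

theorem Module.Basis.repr_eq_zero_of_map_eq_zero {K V W ι : Type*} [Field K] [AddCommGroup V]
    [Module K V] [AddCommGroup W] [Module K W] (b : Module.Basis ι K V) {Φ ρ : V →ₗ[K] W}
    (hρ : Function.Injective ρ) {p : ι → Prop} (hp : ∀ i, p i → Φ (b i) = ρ (b i))
    (hnp : ∀ i, ¬ p i → Φ (b i) = 0) {x : V} (hx : Φ x = 0) {i : ι} (hi : p i) :
    b.repr x i = 0 := by
  obtain ⟨σ, hσ⟩ := ρ.exists_leftInverse_of_injective (LinearMap.ker_eq_bot.mpr hρ)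
  have key : b.coord i = b.coord i ∘ₗ σ ∘ₗ Φ := b.ext fun i' => by
    by_cases hi' : p i'
    · simp [hp i' hi', ← LinearMap.comp_apply σ ρ, hσ]
    · have hne : i' ≠ i := fun h => hi' (h ▸ hi)
      simp [hnp i' hi', hne]
  simpa [hx] using congr($key x)

section BasisOfHomogeneousBlocks

variable {K A S ι : Type} [Field K] [Ring A] [Algebra K A] [DecidableEq S] {Q : S → Type}
  [∀ s, AddCommGroup (Q s)] [∀ s, Module A (Q s)] [∀ s, Module K (Q s)]
  [∀ s, IsScalarTower K A (Q s)] {gr : ∀ s, ℤ → Submodule K (Q s)} [∀ s, Decomposition (gr s)]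
  (b : Module.Basis ι K (Module.End A (⨁ s, Q s))) {src tgt : ι → S} {deg : ι → ℤ}
  (hb : ∀ i, IsHomogBlock gr (src i) (tgt i) (deg i) (b i))
include hb

theorem repr_eq_zero_of_isHomogBlock {l m : S} {j : ℤ} {x : Module.End A (⨁ s, Q s)}
    (hx : IsHomogBlock gr l m j x) {i : ι} (hi : (src i, tgt i, deg i) ≠ (l, m, j)) :
    b.repr x i = 0 :=
  b.repr_eq_zero_of_map_eq_zero (LinearMap.restrictScalars_injective K)
    (p := fun i' => (src i', tgt i', deg i') = (src i, tgt i, deg i))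
    (Φ := blockHomogPart gr (src i) (tgt i) (deg i))
    (ρ := LinearMap.restrictScalarsₗ K _ _ _ K)
    (fun i' h => by
      obtain ⟨hs, ht, hd⟩ : src i' = src i ∧ tgt i' = tgt i ∧ deg i' = deg i := by
        simpa only [Prod.mk.injEq] using h
      rw [← hs, ← ht, ← hd]
      exact blockHomogPart_of_isHomogBlock (hb i'))
    (fun i' h => blockHomogPart_of_isHomogBlock_of_ne (hb i') h)
    (blockHomogPart_of_isHomogBlock_of_ne hx fun h => hi h.symm) rfl

theorem eq_of_isHomogBlock_basis {l m : S} {j : ℤ} {i : ι} (hi : IsHomogBlock gr l m j (b i)) :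
    src i = l ∧ tgt i = m ∧ deg i = j := by
  have htriple : (src i, tgt i, deg i) = (l, m, j) := by_contra fun hne => by
    simpa using repr_eq_zero_of_isHomogBlock b hb hi hne
  simpa only [Prod.mk.injEq] using htriple

variable {tr : Module.End A (⨁ s, Q s) →ₗ[K] K} {d : S → ℤ}
  (htr : ∀ i, tr (b i) ≠ 0 → src i = tgt i ∧ deg i = d (src i))
include htr

theorem trace_eq_zero_of_isHomogBlock {l m : S} {j : ℤ} {x : Module.End A (⨁ s, Q s)}
    (hx : IsHomogBlock gr l m j x) (hlm : ¬ (l = m ∧ j = d l)) : tr x = 0 := by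
  rw [← b.linearCombination_repr x, Finsupp.linearCombination_apply, map_finsuppSum]
  refine Finset.sum_eq_zero fun i _ => ?_
  dsimp only
  by_cases hi : tr (b i) = 0
  · rw [map_smul, hi, smul_zero]
  · obtain ⟨hst, hdeg⟩ := htr i hi
    rw [repr_eq_zero_of_isHomogBlock b hb hx, zero_smul, map_zero]
    rintro ⟨rfl, rfl, rfl⟩
    exact hlm ⟨hst, hdeg⟩

theorem IsHomogBlock.eq_of_trace_mul_ne_zero {l m m' n : S} {j j' : ℤ}
    {f g : Module.End A (⨁ s, Q s)} (hf : IsHomogBlock gr m n j f)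
    (hg : IsHomogBlock gr l m' j' g) (hfg : tr (f * g) ≠ 0) : m' = m ∧ l = n ∧ j' + j = d l := by
  by_cases hm : m' = m
  · subst hm
    by_contra h
    exact hfg (trace_eq_zero_of_isHomogBlock b hb htr (hf.mul hg) fun h' => h ⟨rfl, h'⟩)
  · exact absurd (by rw [hf.mul_eq_zero hg hm, map_zero]) hfg

end BasisOfHomogeneousBlocks

theorem stmt_7_general
    (K A : Type) [Field K] [Ring A] [Algebra K A]
    (Lam : Type) [DecidableEq Lam] (P : Lam → Type)
    [∀ l, AddCommGroup (P l)] [∀ l, Module A (P l)] [∀ l, Module K (P l)]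
    [∀ l, IsScalarTower K A (P l)] [∀ l, SMulCommClass A K (P l)]
    -- gradings on the projective covers, supported in degrees 0..d l
    (d : Lam → ℤ)
    (Pgr : ∀ l, ℤ → Submodule K (P l))
    (hP : ∀ l, DirectSum.IsInternal (Pgr l))
    -- the fixed maps θ_λ : P^λ → P^λ with image soc(P^λ), homogeneous of degree d_λ
    (θ : ∀ s : {l : Lam // Module.Injective A (P l)}, P s.1 →ₗ[A] P s.1)
    (hθhom : ∀ s, IsHomogMap (Pgr s.1) (Pgr s.1) (d s.1) (θ s))
    -- an admissible basis of B = End_A(⊕_{λ∈Λ₀} P^λ): homogeneous elements lying in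
    -- single Hom-blocks, containing the θ's, satisfying the admissible condition
    (ι : Type)
    (b : Module.Basis ι K (Module.End A
      (DirectSum {l : Lam // Module.Injective A (P l)} (fun s => P s.1))))
    (src tgt : ι → {l : Lam // Module.Injective A (P l)}) (deg : ι → ℤ)
    (bmap : ∀ i : ι, P (src i).1 →ₗ[A] P (tgt i).1)
    (hbmap : ∀ i : ι, b i =
      emb A {l : Lam // Module.Injective A (P l)} (fun s => P s.1) (src i) (tgt i) (bmap i))
    (hbhom : ∀ i : ι, IsHomogMap (Pgr (src i).1) (Pgr (tgt i).1) (deg i) (bmap i))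
    (hθin : ∀ s, ∃ i : ι,
      b i = emb A {l : Lam // Module.Injective A (P l)} (fun s => P s.1) s s (θ s))
    -- admissible condition (i)
    (hadm1 : ∀ i : ι, d (tgt i).1 = d (src i).1)
    -- admissible condition (iii)
    (hadm3 : ∀ i : ι, ∃ i' : ι,
      (src i' = tgt i ∧ tgt i' = src i ∧ deg i' = d (src i).1 - deg i) ∧
      (∃ c : K, c ≠ 0 ∧
        b i' * b i = c • emb A {l : Lam // Module.Injective A (P l)} (fun s => P s.1)
          (src i) (src i) (θ (src i)) ∧
        b i * b i' = c • emb A {l : Lam // Module.Injective A (P l)} (fun s => P s.1)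
          (tgt i) (tgt i) (θ (tgt i))) ∧
      (∀ i'' : ι, i'' ≠ i' →
        (src i'' = tgt i ∧ tgt i'' = src i ∧ deg i'' = d (src i).1 - deg i) →
        b i'' * b i = 0 ∧ b i * b i'' = 0))
    -- the canonical form tr attached to the admissible basis
    (tr : Module.End A (DirectSum {l : Lam // Module.Injective A (P l)} (fun s => P s.1)) →ₗ[K] K)
    (htr1 : ∀ i : ι, (∃ s, b i =
        emb A {l : Lam // Module.Injective A (P l)} (fun s => P s.1) s s (θ s)) →
      tr (b i) = 1)
    (htr0 : ∀ i : ι, (¬ ∃ s, b i =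
        emb A {l : Lam // Module.Injective A (P l)} (fun s => P s.1) s s (θ s)) →
      tr (b i) = 0) :
    (∀ x y, tr (x * y) = tr (y * x)) ∧
    (∀ x, x ≠ 0 → ∃ y, tr (x * y) ≠ 0) := by
  let _ := fun s : {l : Lam // Module.Injective A (P l)} => (hP s.1).chooseDecomposition
  let Dual (i j : ι) : Prop := src j = tgt i ∧ tgt j = src i ∧ deg j = d (src i).1 - deg i
  have hb : ∀ i, IsHomogBlock (fun s => Pgr s.1) (src i) (tgt i) (deg i) (b i) :=
    fun i => ⟨bmap i, hbhom i, hbmap i⟩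
  have htrθ : ∀ s (c : K), tr (c • emb A _ (fun s => P s.1) s s (θ s)) = c := by
    intro s c
    obtain ⟨i, hi⟩ := hθin s
    rw [map_smul, ← hi, htr1 i ⟨s, hi⟩, smul_eq_mul, mul_one]
  have htr : ∀ i, tr (b i) ≠ 0 → src i = tgt i ∧ deg i = d (src i).1 := by
    intro i hi
    obtain ⟨s, hs⟩ := not_not.mp (mt (htr0 i) hi)
    obtain ⟨rfl, hts, hds⟩ := eq_of_isHomogBlock_basis b hb ⟨θ s, hθhom s, hs⟩
    exact ⟨hts.symm, hds⟩
  have hR : ∀ i j, tr (b i * b j) ≠ 0 → Dual i j := by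
    intro i j h
    obtain ⟨h1, h2, h3⟩ := (hb i).eq_of_trace_mul_ne_zero b hb (d := fun s => d s.1) htr (hb j) h
    exact ⟨h2, h1, by rw [h2, hadm1] at h3; omega⟩
  have hRsymm : ∀ i j, Dual i j → Dual j i := by
    rintro i j ⟨h1, h2, h3⟩
    exact ⟨h2.symm, h1.symm, by rw [h1, hadm1]; omega⟩
  have hpair : ∀ i, ∃ i', Dual i i' ∧ tr (b i' * b i) = tr (b i * b i') ∧
      tr (b i * b i') ≠ 0 ∧ ∀ i'', i'' ≠ i' → Dual i i'' → b i'' * b i = 0 ∧ b i * b i'' = 0 := by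
    intro i
    obtain ⟨i', hR', ⟨c, hc, h1, h2⟩, hzero⟩ := hadm3 i
    exact ⟨i', hR', by rw [h1, h2, htrθ, htrθ], by rwa [h2, htrθ], hzero⟩
  exact ⟨trace_mul_comm_of_basis b tr (trace_mul_basis_comm_of_pairing b tr hR hRsymm hpair),
    fun _ => exists_trace_mul_ne_zero_of_basis b tr (exists_dual_of_pairing b tr hR hRsymm hpair)⟩

/-- Let `A` be a positively graded finite-dimensional algebra over an
algebraically closed field with `soc(P^μ) ≅ L^μ⟨d_μ⟩` for each `μ ∈ Λ₀`.  If the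
endomorphism algebra `B` of the basic projective-injective module admits an admissible
basis `Υ`, then the canonical form `tr` attached to `Υ` is a symmetrizing form on `B`;
in particular `B` is a symmetric algebra. -/
theorem stmt_7
    (K A : Type) [Field K] [IsAlgClosed K] [Ring A] [Algebra K A] [FiniteDimensional K A]
    -- positive grading on A
    (gA : ℤ → Submodule K A)
    (hA : DirectSum.IsInternal gA)
    (hA1 : (1 : A) ∈ gA 0)
    (hAmul : ∀ i j : ℤ, ∀ a ∈ gA i, ∀ b ∈ gA j, a * b ∈ gA (i + j))
    (hApos : ∀ i : ℤ, i < 0 → gA i = ⊥)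
    (Lam : Type) [DecidableEq Lam] (L P : Lam → Type)
    [∀ l, AddCommGroup (L l)] [∀ l, Module A (L l)] [∀ l, Module K (L l)]
    [∀ l, IsScalarTower K A (L l)] [∀ l, FiniteDimensional K (L l)]
    [∀ l, AddCommGroup (P l)] [∀ l, Module A (P l)] [∀ l, Module K (P l)]
    [∀ l, IsScalarTower K A (P l)] [∀ l, SMulCommClass A K (P l)]
    [∀ l, FiniteDimensional K (P l)]
    (hsimple : ∀ l, IsSimpleModule A (L l))
    (hdistinct : ∀ l m, Nonempty (L l ≃ₗ[A] L m) → l = m)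
    (hproj : ∀ l, Module.Projective A (P l))
    (hcover : ∀ l, ∃ π : P l →ₗ[A] L l, Function.Surjective π ∧ LinearMap.ker π = Rad A (P l))
    -- gradings on the projective covers, supported in degrees 0..d l
    (d : Lam → ℤ) (hd : ∀ l, 0 ≤ d l)
    (Pgr : ∀ l, ℤ → Submodule K (P l))
    (hP : ∀ l, DirectSum.IsInternal (Pgr l))
    (hPsmul : ∀ l, ∀ i j : ℤ, ∀ a ∈ gA i, ∀ x ∈ Pgr l j, a • x ∈ Pgr l (i + j))
    (hPsupp : ∀ l, ∀ i : ℤ, (i < 0 ∨ d l < i) → Pgr l i = ⊥)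
    (hPtop : ∀ l, Pgr l (d l) ≠ ⊥)
    -- soc(P^μ) ≅ L^μ⟨d_μ⟩ for each μ ∈ Λ₀
    (hsoc : ∀ l, Module.Injective A (P l) → Nonempty (↥(Socle A (P l)) ≃ₗ[A] L l))
    (hsocdeg : ∀ l, Module.Injective A (P l) →
      (Socle A (P l) : Set (P l)) ⊆ (Pgr l (d l) : Set (P l)))
    -- the fixed maps θ_λ : P^λ → P^λ with image soc(P^λ), homogeneous of degree d_λ
    (θ : ∀ s : {l : Lam // Module.Injective A (P l)}, P s.1 →ₗ[A] P s.1)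
    (hθ : ∀ s, LinearMap.range (θ s) = Socle A (P s.1))
    (hθhom : ∀ s, IsHomogMap (Pgr s.1) (Pgr s.1) (d s.1) (θ s))
    -- an admissible basis of B = End_A(⊕_{λ∈Λ₀} P^λ): homogeneous elements lying in
    -- single Hom-blocks, containing the θ's, satisfying the admissible condition
    (ι : Type) [Fintype ι]
    (b : Module.Basis ι K (Module.End A
      (DirectSum {l : Lam // Module.Injective A (P l)} (fun s => P s.1))))
    (src tgt : ι → {l : Lam // Module.Injective A (P l)}) (deg : ι → ℤ)
    (bmap : ∀ i : ι, P (src i).1 →ₗ[A] P (tgt i).1)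
    (hbmap : ∀ i : ι, b i =
      emb A {l : Lam // Module.Injective A (P l)} (fun s => P s.1) (src i) (tgt i) (bmap i))
    (hbhom : ∀ i : ι, IsHomogMap (Pgr (src i).1) (Pgr (tgt i).1) (deg i) (bmap i))
    (hθin : ∀ s, ∃ i : ι,
      b i = emb A {l : Lam // Module.Injective A (P l)} (fun s => P s.1) s s (θ s))
    -- admissible condition (i)
    (hadm1 : ∀ i : ι, d (tgt i).1 = d (src i).1)
    -- admissible condition (ii)
    (hadm2 : ∀ i : ι,
      Set.ncard {i' : ι | src i' = tgt i ∧ tgt i' = src i ∧ deg i' = d (src i).1 - deg i} =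
      Set.ncard {i' : ι | src i' = src i ∧ tgt i' = tgt i ∧ deg i' = deg i})
    -- admissible condition (iii)
    (hadm3 : ∀ i : ι, ∃ i' : ι,
      (src i' = tgt i ∧ tgt i' = src i ∧ deg i' = d (src i).1 - deg i) ∧
      (∃ c : K, c ≠ 0 ∧
        b i' * b i = c • emb A {l : Lam // Module.Injective A (P l)} (fun s => P s.1)
          (src i) (src i) (θ (src i)) ∧
        b i * b i' = c • emb A {l : Lam // Module.Injective A (P l)} (fun s => P s.1)
          (tgt i) (tgt i) (θ (tgt i))) ∧
      (∀ i'' : ι, i'' ≠ i' →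
        (src i'' = tgt i ∧ tgt i'' = src i ∧ deg i'' = d (src i).1 - deg i) →
        b i'' * b i = 0 ∧ b i * b i'' = 0))
    -- the canonical form tr attached to the admissible basis
    (tr : Module.End A (DirectSum {l : Lam // Module.Injective A (P l)} (fun s => P s.1)) →ₗ[K] K)
    (htr1 : ∀ i : ι, (∃ s, b i =
        emb A {l : Lam // Module.Injective A (P l)} (fun s => P s.1) s s (θ s)) →
      tr (b i) = 1)
    (htr0 : ∀ i : ι, (¬ ∃ s, b i =
        emb A {l : Lam // Module.Injective A (P l)} (fun s => P s.1) s s (θ s)) →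
      tr (b i) = 0) :
    (∀ x y, tr (x * y) = tr (y * x)) ∧
    (∀ x, x ≠ 0 → ∃ y, tr (x * y) ≠ 0) :=
  stmt_7_general K A Lam P d Pgr hP θ hθhom ι b src tgt deg bmap hbmap hbhom hθin hadm1 hadm3 tr
    htr1 htr0
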